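/- Let (Y,Θ) be the suspension flow over a countable Markov shift (Σ,σ) with roof function τ bounded away from zero, and let τ ∈ R (uniformly continuous, bounded below, var_2(τ) < ∞, and inf{τ(x) : x_1 ≥ k} → ∞ as k → ∞). A sequence (ν_n) of flow-invariant probability measures converges on cylinders to the zero measure if and only if ∫ τ dψ(ν_n) → ∞, where ψ(ν_n) is the shift-invariant probability measure with ν_n = (ψ(ν_n) × Leb)/∫τ dψ(ν_n). -/

import Mathlib

open MeasureTheory Filter Topology
open scoped NNReal ENNReal

/-- The underlying set of the countable Markov shift with transition matrix `B`. -/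
def ShiftSet (B : ℕ → ℕ → Prop) : Set (ℕ → ℕ) := {x | ∀ n, B (x n) (x (n + 1))}

/-- The countable Markov shift determined by the transition matrix `B`,
with the subspace topology of the product topology and the induced Borel structure. -/
abbrev Shift (B : ℕ → ℕ → Prop) : Type := ↥(ShiftSet B)

/-- The cylinder set determined by a finite word `w`. -/
def cyl (B : ℕ → ℕ → Prop) (w : List ℕ) : Set (Shift B) :=
  {x | ∀ j : Fin w.length, x.val j = w.get j}

/-- The shift map. -/
def shiftMap (B : ℕ → ℕ → Prop) : Shift B → Shift B :=
  fun x => ⟨fun n => x.val (n + 1), fun n => x.property (n + 1)⟩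

/-- A measure is shift invariant if the measure of the preimage under the shift of
any Borel set coincides with the measure of the set. -/
def IsShiftInvariant (B : ℕ → ℕ → Prop) (μ : Measure (Shift B)) : Prop :=
  ∀ s : Set (Shift B), MeasurableSet s → μ (shiftMap B ⁻¹' s) = μ s

/-- The class `R` of roof functions: uniformly continuous (in the shift metric), bounded
away from zero, with finite second variation, and tending to infinity as the first symbol
tends to infinity. -/
def ClassR (B : ℕ → ℕ → Prop) (τ : Shift B → ℝ) : Prop :=
  (∀ ε > (0 : ℝ), ∃ N : ℕ, ∀ x y : Shift B,
      (∀ j < N, x.val j = y.val j) → |τ x - τ y| < ε) ∧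
  (∃ c > (0 : ℝ), ∀ x, c ≤ τ x) ∧
  (∃ V : ℝ, ∀ x y : Shift B, x.val 0 = y.val 0 → x.val 1 = y.val 1 → |τ x - τ y| ≤ V) ∧
  (∀ M : ℝ, ∃ k : ℕ, ∀ x : Shift B, k ≤ x.val 0 → M ≤ τ x)

/-- The flow-invariant measure of the suspension flow with roof `τ` associated to a
shift-invariant probability measure `μ` with `∫ τ dμ < ∞`: the normalized restriction of
`μ × Leb` to the region below the graph of `τ`. -/
noncomputable def suspMeasure (B : ℕ → ℕ → Prop) (τ : Shift B → ℝ)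
    (μ : Measure (Shift B)) [SFinite μ] : Measure (Shift B × ℝ) :=
  (ENNReal.ofReal (∫ x, τ x ∂μ))⁻¹ •
    ((μ.prod volume).restrict {p : Shift B × ℝ | 0 ≤ p.2 ∧ p.2 < τ p.1})

lemma measurableSet_cyl (B : ℕ → ℕ → Prop) (w : List ℕ) :
    MeasurableSet (cyl B w) := by
  have : cyl B w = ⋂ j : Fin w.length, {x : Shift B | x.val j = w.get j} := by
    ext x; simp [cyl, Set.mem_iInter]
  rw [this]
  refine MeasurableSet.iInter fun j => ?_
  have hm : Measurable (fun x : Shift B => x.val j) :=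
    (measurable_pi_apply (j : ℕ)).comp measurable_subtype_coe
  exact hm (measurableSet_singleton (w.get j))

lemma susp_apply (B : ℕ → ℕ → Prop) (τ : Shift B → ℝ)
    (c : ℝ) (hc : 0 < c) (hcτ : ∀ x, c ≤ τ x)
    (μ : Measure (Shift B)) [IsProbabilityMeasure μ] (w : List ℕ) :
    suspMeasure B τ μ (cyl B w ×ˢ Set.Icc 0 c) =
      (ENNReal.ofReal (∫ x, τ x ∂μ))⁻¹ * (ENNReal.ofReal c * μ (cyl B w)) := by
  have hmeas : MeasurableSet (cyl B w ×ˢ Set.Icc (0:ℝ) c) :=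
    (measurableSet_cyl B w).prod measurableSet_Icc
  rw [suspMeasure, Measure.smul_apply, Measure.restrict_apply hmeas, smul_eq_mul]
  congr 1
  apply le_antisymm
  · calc (μ.prod volume) ((cyl B w ×ˢ Set.Icc 0 c) ∩ _)
        ≤ (μ.prod volume) (cyl B w ×ˢ Set.Icc 0 c) := measure_mono Set.inter_subset_left
    _ = μ (cyl B w) * ENNReal.ofReal c := by
        rw [Measure.prod_prod, Real.volume_Icc, sub_zero]
    _ = ENNReal.ofReal c * μ (cyl B w) := mul_comm _ _
  · calc ENNReal.ofReal c * μ (cyl B w)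
        = (μ.prod volume) (cyl B w ×ˢ Set.Ico 0 c) := by
          rw [Measure.prod_prod, Real.volume_Ico, sub_zero, mul_comm]
    _ ≤ _ := by
        apply measure_mono
        rintro ⟨x, t⟩ ⟨hx, ht0, htc⟩
        exact ⟨⟨hx, ht0, htc.le⟩, ht0, lt_of_lt_of_le htc (hcτ x)⟩
/-- for a roof function `τ ∈ R`, a sequence of flow-invariant probability
measures of the suspension flow converges on cylinders (sets `C × [0,c]`, `0 < c ≤ inf τ`)
to the zero measure if and only if the `τ`-integrals of the associated shift-invariant
probability measures tend to infinity. -/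
theorem stmt15 (B : ℕ → ℕ → Prop) (τ : Shift B → ℝ) (hτ : ClassR B τ)
    (c : ℝ) (hc : 0 < c) (hcτ : ∀ x, c ≤ τ x)
    (μs : ℕ → Measure (Shift B)) [∀ n, IsProbabilityMeasure (μs n)]
    (hinv : ∀ n, IsShiftInvariant B (μs n)) (hint : ∀ n, Integrable τ (μs n)) :
    (∀ w : List ℕ, w ≠ [] →
        Tendsto (fun n => suspMeasure B τ (μs n) (cyl B w ×ˢ Set.Icc 0 c)) atTop (𝓝 0)) ↔
    Tendsto (fun n => ∫ x, τ x ∂(μs n)) atTop atTop := by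
  have key : ∀ n (w : List ℕ),
      suspMeasure B τ (μs n) (cyl B w ×ˢ Set.Icc 0 c) =
        (ENNReal.ofReal (∫ x, τ x ∂μs n))⁻¹ * (ENNReal.ofReal c * μs n (cyl B w)) :=
    fun n w => susp_apply B τ c hc hcτ (μs n) w
  constructor
  · -- cylinder convergence to zero implies integrals to infinity
    intro h
    by_contra hT
    rw [tendsto_atTop] at hT
    push_neg at hT
    obtain ⟨b, hb⟩ := hT
    set M := max b c with hM
    have hM0 : 0 < M := lt_of_lt_of_le hc (le_max_right _ _)
    have hfreq : ∃ᶠ n in atTop, ∫ x, τ x ∂μs n ≤ M := by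
      exact hb.mono fun n hn => le_trans hn.le (le_max_left _ _)
    obtain ⟨k₀, hk₀⟩ := hτ.2.2.2 (2 * M)
    set k := k₀ + 1 with hkdef
    have hkpos : (0:ℝ) < (k:ℝ) := by positivity
    set ε := 1 / (4 * (k:ℝ)) with hε
    have hεpos : 0 < ε := by positivity
    set δ := (ENNReal.ofReal M)⁻¹ * (ENNReal.ofReal c * ENNReal.ofReal ε) with hδ
    have hδpos : 0 < δ := by
      refine ENNReal.mul_pos (ENNReal.inv_ne_zero.mpr ENNReal.ofReal_ne_top) ?_
      exact (ENNReal.mul_pos (ENNReal.ofReal_pos.mpr hc).ne'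
        (ENNReal.ofReal_pos.mpr hεpos).ne').ne'
    have hev : ∀ᶠ n in atTop, ∀ a ∈ Finset.range k,
        suspMeasure B τ (μs n) (cyl B [a] ×ˢ Set.Icc 0 c) < δ := by
      rw [eventually_all_finset]
      intro a _
      exact (h [a] (by simp)).eventually (gt_mem_nhds hδpos)
    obtain ⟨n, hnM, hna⟩ := (hfreq.and_eventually hev).exists
    set A : Set (Shift B) := {x : Shift B | k ≤ x.val 0} with hA
    have hAmeas : MeasurableSet A := by
      have hm : Measurable (fun x : Shift B => x.val 0) :=
        (measurable_pi_apply 0).comp measurable_subtype_coe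
      exact hm measurableSet_Ici
    have hAsub : A ⊆ {x | 2 * M ≤ τ x} := fun x hx => hk₀ x (Nat.le_of_succ_le hx)
    have h1 : (μs n A).toReal ≤ (μs n {x | 2*M ≤ τ x}).toReal :=
      ENNReal.toReal_mono (measure_ne_top _ _) (measure_mono hAsub)
    have h2 := mul_meas_ge_le_integral_of_nonneg
      (ae_of_all _ fun x => le_trans hc.le (hcτ x)) (hint n) (2*M)
    have hmark : 2*M*(μs n A).toReal ≤ ∫ x, τ x ∂μs n :=
      le_trans (mul_le_mul_of_nonneg_left h1 (by positivity)) h2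
    have hA2 : μs n A ≤ ENNReal.ofReal (1/2) := by
      rw [← ENNReal.ofReal_toReal (measure_ne_top (μs n) A)]
      exact ENNReal.ofReal_le_ofReal (by nlinarith)
    have hcompl : ENNReal.ofReal (1/2) ≤ μs n Aᶜ := by
      rw [measure_compl hAmeas (measure_ne_top _ _), measure_univ]
      calc ENNReal.ofReal (1/2) = 1 - ENNReal.ofReal (1/2) := by
            rw [← ENNReal.ofReal_one, ← ENNReal.ofReal_sub _ (by norm_num)]; norm_num
      _ ≤ 1 - μs n A := tsub_le_tsub_left hA2 1
    have hsub : Aᶜ ⊆ ⋃ a ∈ Finset.range k, cyl B [a] := by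
      intro x hx
      simp only [Set.mem_compl_iff, hA, Set.mem_setOf_eq, not_le] at hx
      refine Set.mem_biUnion (Finset.mem_range.2 hx) ?_
      intro j
      have hj : (j : ℕ) = 0 := by have := j.isLt; simp only [List.length_singleton] at this; omega
      simp [hj]
    have hsum : ENNReal.ofReal (1/2) ≤ ∑ a ∈ Finset.range k, μs n (cyl B [a]) :=
      le_trans hcompl (le_trans (measure_mono hsub) (measure_biUnion_finset_le _ _))
    have hex : ∃ a ∈ Finset.range k, ENNReal.ofReal ε ≤ μs n (cyl B [a]) := by
      by_contra hcon
      push_neg at hcon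
      have hle : ∑ a ∈ Finset.range k, μs n (cyl B [a])
          ≤ ∑ _a ∈ Finset.range k, ENNReal.ofReal ε :=
        Finset.sum_le_sum fun a ha => (hcon a ha).le
      rw [Finset.sum_const, Finset.card_range, nsmul_eq_mul] at hle
      have hk' : (k : ℝ≥0∞) * ENNReal.ofReal ε = ENNReal.ofReal ((k:ℝ) * ε) := by
        rw [ENNReal.ofReal_mul hkpos.le, ENNReal.ofReal_natCast]
      have hfin : ENNReal.ofReal (1/2) ≤ ENNReal.ofReal ((k:ℝ)*ε) :=
        le_trans hsum (hle.trans_eq hk')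
      rw [ENNReal.ofReal_le_ofReal_iff (by positivity)] at hfin
      have hkε : (k:ℝ) * ε = 1/4 := by
        rw [hε]; field_simp
      rw [hkε] at hfin
      linarith
    obtain ⟨a, hak, haμ⟩ := hex
    have hlt := hna a hak
    rw [key n [a]] at hlt
    have hge : δ ≤ (ENNReal.ofReal (∫ x, τ x ∂μs n))⁻¹
        * (ENNReal.ofReal c * μs n (cyl B [a])) := by
      rw [hδ]
      exact mul_le_mul' (ENNReal.inv_le_inv' (ENNReal.ofReal_le_ofReal hnM))
        (mul_le_mul_right haμ _)
    exact absurd hlt (not_lt.2 hge)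
  · -- integrals to infinity imply cylinder convergence to zero
    intro hT w _
    have h1 : Tendsto (fun n => ENNReal.ofReal (∫ x, τ x ∂μs n)) atTop (𝓝 ⊤) :=
      ENNReal.tendsto_ofReal_atTop.comp hT
    have h2 : Tendsto (fun n => (ENNReal.ofReal (∫ x, τ x ∂μs n))⁻¹) atTop (𝓝 0) := by
      have := ENNReal.tendsto_inv_iff.2 h1
      simpa using this
    have h3 : Tendsto (fun n => (ENNReal.ofReal (∫ x, τ x ∂μs n))⁻¹ * ENNReal.ofReal c)
        atTop (𝓝 0) := by
      have := ENNReal.Tendsto.mul_const h2 (Or.inr (ENNReal.ofReal_ne_top : ENNReal.ofReal c ≠ ⊤))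
      simpa using this
    refine tendsto_of_tendsto_of_tendsto_of_le_of_le tendsto_const_nhds h3
      (fun n => zero_le) (fun n => ?_)
    rw [key n w]
    exact mul_le_mul_right ((mul_le_mul_right prob_le_one _).trans_eq (mul_one _)) _
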